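/- arXiv:1609.05728 — 6 statements merged into one kernel-verified Lean document; each statement's English description precedes it below -/
import Mathlib

section
/- Let L > 0 and u₀ > 0. For all square-integrable functions s, s̃ : (0,L) → ℝ, one has ( ∫₀ᴸ (sat₂(s)(x) − sat₂(s̃)(x))² dx )^{1/2} ≤ 3 ( ∫₀ᴸ (s(x) − s̃(x))² dx )^{1/2}; that is, the map sat₂ is globally Lipschitz on L²(0,L) with constant 3. -/
open MeasureTheory

private lemma expand_int {μ : Measure ℝ} {f g : ℝ → ℝ}
    (hf : Integrable (fun x => f x ^ 2) μ) (hg : Integrable (fun x => g x ^ 2) μ)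
    (hfg : Integrable (fun x => f x * g x) μ) (t : ℝ) :
    ∫ x, (t * f x + g x) ^ 2 ∂μ
      = t ^ 2 * ∫ x, f x ^ 2 ∂μ + 2 * t * ∫ x, f x * g x ∂μ + ∫ x, g x ^ 2 ∂μ := by
  have h1 : (fun x => (t * f x + g x) ^ 2)
      = fun x => t ^ 2 * f x ^ 2 + 2 * t * (f x * g x) + g x ^ 2 := by
    funext x; ring
  have hA : Integrable (fun x => t ^ 2 * f x ^ 2 + 2 * t * (f x * g x)) μ := by
    have := (hf.const_mul (t ^ 2)).add (hfg.const_mul (2 * t))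
    exact this
  rw [h1, integral_add hA hg,
    integral_add (hf.const_mul _) (hfg.const_mul _), integral_const_mul, integral_const_mul]

private lemma cs_int {μ : Measure ℝ} {f g : ℝ → ℝ}
    (hf : Integrable (fun x => f x ^ 2) μ) (hg : Integrable (fun x => g x ^ 2) μ)
    (hfg : Integrable (fun x => f x * g x) μ) :
    ∫ x, f x * g x ∂μ ≤ Real.sqrt (∫ x, f x ^ 2 ∂μ) * Real.sqrt (∫ x, g x ^ 2 ∂μ) := by
  set F := ∫ x, f x ^ 2 ∂μ with hF_def
  set G := ∫ x, g x ^ 2 ∂μ with hG_def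
  set P := ∫ x, f x * g x ∂μ with hP_def
  have hF0 : 0 ≤ F := integral_nonneg fun x => sq_nonneg _
  have hG0 : 0 ≤ G := integral_nonneg fun x => sq_nonneg _
  have key : ∀ t : ℝ, 0 ≤ t ^ 2 * F + 2 * t * P + G := by
    intro t
    have h := expand_int hf hg hfg t
    rw [← hF_def, ← hG_def, ← hP_def] at h
    calc (0:ℝ) ≤ ∫ x, (t * f x + g x) ^ 2 ∂μ := integral_nonneg fun x => sq_nonneg _
      _ = t ^ 2 * F + 2 * t * P + G := h
  have hP2 : P ^ 2 ≤ F * G := by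
    rcases eq_or_lt_of_le hF0 with hF | hF
    · have hPz : P = 0 := by
        by_contra hPne
        have h1 := key (-(G + 1) / (2 * P))
        have h2 : 2 * (-(G + 1) / (2 * P)) * P = -(G + 1) := by
          field_simp
        rw [← hF] at h1
        nlinarith [h1, h2]
      rw [hPz, ← hF]
      simp
    · have h1 := key (-(P / F))
      have e : P / F * F = P := div_mul_cancel₀ P hF.ne'
      nlinarith [h1, e, hF, sq_nonneg (P / F)]
  calc P ≤ |P| := le_abs_self P
    _ = Real.sqrt (P ^ 2) := (Real.sqrt_sq_eq_abs P).symm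
    _ ≤ Real.sqrt (F * G) := Real.sqrt_le_sqrt hP2
    _ = Real.sqrt F * Real.sqrt G := Real.sqrt_mul hF0 _

private lemma minkowski_int {μ : Measure ℝ} (f g : ℝ → ℝ)
    (hf : Integrable (fun x => f x ^ 2) μ) (hg : Integrable (fun x => g x ^ 2) μ)
    (hfg : Integrable (fun x => f x * g x) μ) :
    Real.sqrt (∫ x, (f x + g x) ^ 2 ∂μ)
      ≤ Real.sqrt (∫ x, f x ^ 2 ∂μ) + Real.sqrt (∫ x, g x ^ 2 ∂μ) := by
  have h := expand_int hf hg hfg 1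
  simp only [one_mul, one_pow] at h
  have cs := cs_int hf hg hfg
  have hF0 : 0 ≤ ∫ x, f x ^ 2 ∂μ := integral_nonneg fun x => sq_nonneg _
  have hG0 : 0 ≤ ∫ x, g x ^ 2 ∂μ := integral_nonneg fun x => sq_nonneg _
  calc Real.sqrt (∫ x, (f x + g x) ^ 2 ∂μ)
      ≤ Real.sqrt ((Real.sqrt (∫ x, f x ^ 2 ∂μ) + Real.sqrt (∫ x, g x ^ 2 ∂μ)) ^ 2) := by
        apply Real.sqrt_le_sqrt
        rw [h]
        nlinarith [Real.sq_sqrt hF0, Real.sq_sqrt hG0,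
          Real.sqrt_nonneg (∫ x, f x ^ 2 ∂μ), Real.sqrt_nonneg (∫ x, g x ^ 2 ∂μ)]
    _ = Real.sqrt (∫ x, f x ^ 2 ∂μ) + Real.sqrt (∫ x, g x ^ 2 ∂μ) := by
        apply Real.sqrt_sq
        positivity

private lemma sqrt_int_smul_sq {μ : Measure ℝ} (c : ℝ) (g : ℝ → ℝ) :
    Real.sqrt (∫ x, (c * g x) ^ 2 ∂μ) = |c| * Real.sqrt (∫ x, g x ^ 2 ∂μ) := by
  have h : (fun x => (c * g x) ^ 2) = fun x => c ^ 2 * g x ^ 2 := funext fun x => by ring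
  rw [h, integral_const_mul, Real.sqrt_mul (sq_nonneg c), Real.sqrt_sq_eq_abs]

/-- The `L²(0,L)` saturation operator: `sat₂(s)(x) = s(x)` if `‖s‖_{L²(0,L)} ≤ u₀`,
and `sat₂(s)(x) = u₀ s(x) / ‖s‖_{L²(0,L)}` otherwise. -/
noncomputable def sat2 (L u₀ : ℝ) (s : ℝ → ℝ) (x : ℝ) : ℝ :=
  if Real.sqrt (∫ y in Set.Ioo 0 L, s y ^ 2) ≤ u₀ then s x
  else u₀ * s x / Real.sqrt (∫ y in Set.Ioo 0 L, s y ^ 2)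

/-- `sat₂` is globally Lipschitz on `L²(0,L)` with constant `3`. -/
theorem sat2_lipschitz (L u₀ : ℝ) (hL : 0 < L) (hu₀ : 0 < u₀)
    (s s' : ℝ → ℝ)
    (hs : Integrable (fun x => s x ^ 2) (volume.restrict (Set.Ioo 0 L)))
    (hs' : Integrable (fun x => s' x ^ 2) (volume.restrict (Set.Ioo 0 L))) :
    Real.sqrt (∫ x in Set.Ioo 0 L, (sat2 L u₀ s x - sat2 L u₀ s' x) ^ 2) ≤
      3 * Real.sqrt (∫ x in Set.Ioo 0 L, (s x - s' x) ^ 2) := by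
  set μ := volume.restrict (Set.Ioo 0 L) with hμ
  set a := Real.sqrt (∫ x, s x ^ 2 ∂μ) with ha_def
  set b := Real.sqrt (∫ x, s' x ^ 2 ∂μ) with hb_def
  set d := Real.sqrt (∫ x, (s x - s' x) ^ 2 ∂μ) with hd_def
  have ha0 : 0 ≤ a := Real.sqrt_nonneg _
  have hb0 : 0 ≤ b := Real.sqrt_nonneg _
  have hd0 : 0 ≤ d := Real.sqrt_nonneg _
  set c : ℝ := if a ≤ u₀ then 1 else u₀ / a with hc_def
  set c' : ℝ := if b ≤ u₀ then 1 else u₀ / b with hc'_def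
  have hcs : ∀ x, sat2 L u₀ s x = c * s x := by
    intro x
    simp only [sat2, ← hμ, ← ha_def]
    rw [hc_def]
    split_ifs with h <;> ring
  have hcs' : ∀ x, sat2 L u₀ s' x = c' * s' x := by
    intro x
    simp only [sat2, ← hμ, ← hb_def]
    rw [hc'_def]
    split_ifs with h <;> ring
  have hrw : (fun x => (sat2 L u₀ s x - sat2 L u₀ s' x) ^ 2)
      = fun x => (c * s x - c' * s' x) ^ 2 := by
    funext x; rw [hcs x, hcs' x]
  have hc0 : 0 < c := by
    rw [hc_def]; split_ifs with h
    · norm_num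
    · exact div_pos hu₀ (hu₀.trans (not_le.1 h))
  have hc'0 : 0 < c' := by
    rw [hc'_def]; split_ifs with h
    · norm_num
    · exact div_pos hu₀ (hu₀.trans (not_le.1 h))
  rw [hrw]
  by_cases hint : Integrable (fun x => (s x - s' x) ^ 2) μ
  · -- the integrable case
    have hmul : Integrable (fun x => s x * s' x) μ := by
      have h : (fun x => s x * s' x)
          = fun x => (s x ^ 2 + s' x ^ 2 - (s x - s' x) ^ 2) / 2 := by
        funext x; ring
      rw [h]; exact ((hs.add hs').sub hint).div_const 2
    have hds' : Integrable (fun x => (s x - s' x) * s' x) μ := by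
      have h : (fun x => (s x - s' x) * s' x) = fun x => s x * s' x - s' x ^ 2 := by
        funext x; ring
      rw [h]; exact hmul.sub hs'
    have hd'int : Integrable (fun x => (s' x - s x) ^ 2) μ := by
      have h : (fun x => (s' x - s x) ^ 2) = fun x => (s x - s' x) ^ 2 := by
        funext x; ring
      rw [h]; exact hint
    have hd's : Integrable (fun x => (s' x - s x) * s x) μ := by
      have h : (fun x => (s' x - s x) * s x) = fun x => s x * s' x - s x ^ 2 := by
        funext x; ring
      rw [h]; exact hmul.sub hs
    have hba : b ≤ a + d := by
      have key := minkowski_int (μ := μ) (fun x => s' x - s x) s hd'int hs hd's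
      rw [show (fun x => (s' x - s x + s x) ^ 2) = fun x => s' x ^ 2 from funext fun x => by ring,
        show (fun x => (s' x - s x) ^ 2) = fun x => (s x - s' x) ^ 2 from funext fun x => by ring,
        ← hb_def, ← hd_def, ← ha_def] at key
      linarith
    have hab : a ≤ b + d := by
      have key := minkowski_int (μ := μ) (fun x => s x - s' x) s' hint hs' hds'
      rw [show (fun x => (s x - s' x + s' x) ^ 2) = fun x => s x ^ 2 from funext fun x => by ring,
        ← ha_def, ← hd_def, ← hb_def] at key
      linarith
    by_cases hA : a ≤ u₀ <;> by_cases hB : b ≤ u₀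
    · have hc1 : c = 1 := by rw [hc_def, if_pos hA]
      have hc'1 : c' = 1 := by rw [hc'_def, if_pos hB]
      rw [hc1, hc'1,
        show (fun x => ((1:ℝ) * s x - 1 * s' x) ^ 2) = fun x => (s x - s' x) ^ 2 from
          funext fun x => by ring, ← hd_def]
      linarith
    · -- a ≤ u₀ < b
      have hub : u₀ < b := not_le.1 hB
      have hb0' : 0 < b := hu₀.trans hub
      have hc1 : c = 1 := by rw [hc_def, if_pos hA]
      have hc'v : c' = u₀ / b := by rw [hc'_def, if_neg hB]
      have hg2 : Integrable (fun x => ((1 - u₀ / b) * s' x) ^ 2) μ := by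
        have h : (fun x => ((1 - u₀ / b) * s' x) ^ 2)
            = fun x => (1 - u₀ / b) ^ 2 * s' x ^ 2 := funext fun x => by ring
        rw [h]; exact hs'.const_mul _
      have hfg : Integrable (fun x => (s x - s' x) * ((1 - u₀ / b) * s' x)) μ := by
        have h : (fun x => (s x - s' x) * ((1 - u₀ / b) * s' x))
            = fun x => (1 - u₀ / b) * ((s x - s' x) * s' x) := funext fun x => by ring
        rw [h]; exact hds'.const_mul _
      have key := minkowski_int (μ := μ) (fun x => s x - s' x)
        (fun x => (1 - u₀ / b) * s' x) hint hg2 hfg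
      rw [sqrt_int_smul_sq, ← hd_def, ← hb_def] at key
      have habs : |1 - u₀ / b| = 1 - u₀ / b :=
        abs_of_nonneg (by rw [sub_nonneg]; exact (div_le_one hb0').2 hub.le)
      have hval : (1 - u₀ / b) * b = b - u₀ := by field_simp
      rw [habs, hval] at key
      rw [hc1, hc'v,
        show (fun x => ((1:ℝ) * s x - u₀ / b * s' x) ^ 2)
          = fun x => (s x - s' x + (1 - u₀ / b) * s' x) ^ 2 from funext fun x => by ring]
      linarith
    · -- b ≤ u₀ < a
      have hua : u₀ < a := not_le.1 hA
      have ha0' : 0 < a := hu₀.trans hua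
      have hcv : c = u₀ / a := by rw [hc_def, if_neg hA]
      have hc'1 : c' = 1 := by rw [hc'_def, if_pos hB]
      have hg2 : Integrable (fun x => ((1 - u₀ / a) * s x) ^ 2) μ := by
        have h : (fun x => ((1 - u₀ / a) * s x) ^ 2)
            = fun x => (1 - u₀ / a) ^ 2 * s x ^ 2 := funext fun x => by ring
        rw [h]; exact hs.const_mul _
      have hfg : Integrable (fun x => (s' x - s x) * ((1 - u₀ / a) * s x)) μ := by
        have h : (fun x => (s' x - s x) * ((1 - u₀ / a) * s x))
            = fun x => (1 - u₀ / a) * ((s' x - s x) * s x) := funext fun x => by ring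
        rw [h]; exact hd's.const_mul _
      have key := minkowski_int (μ := μ) (fun x => s' x - s x)
        (fun x => (1 - u₀ / a) * s x) hd'int hg2 hfg
      rw [sqrt_int_smul_sq,
        show (fun x => (s' x - s x) ^ 2) = fun x => (s x - s' x) ^ 2 from
          funext fun x => by ring, ← hd_def, ← ha_def] at key
      have habs : |1 - u₀ / a| = 1 - u₀ / a :=
        abs_of_nonneg (by rw [sub_nonneg]; exact (div_le_one ha0').2 hua.le)
      have hval : (1 - u₀ / a) * a = a - u₀ := by field_simp
      rw [habs, hval] at key
      rw [hcv, hc'1,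
        show (fun x => (u₀ / a * s x - (1:ℝ) * s' x) ^ 2)
          = fun x => (s' x - s x + (1 - u₀ / a) * s x) ^ 2 from funext fun x => by ring]
      linarith
    · -- u₀ < a and u₀ < b
      have hua : u₀ < a := not_le.1 hA
      have hub : u₀ < b := not_le.1 hB
      have ha0' : 0 < a := hu₀.trans hua
      have hb0' : 0 < b := hu₀.trans hub
      have hcv : c = u₀ / a := by rw [hc_def, if_neg hA]
      have hc'v : c' = u₀ / b := by rw [hc'_def, if_neg hB]
      have hf2 : Integrable (fun x => (u₀ / a * (s x - s' x)) ^ 2) μ := by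
        have h : (fun x => (u₀ / a * (s x - s' x)) ^ 2)
            = fun x => (u₀ / a) ^ 2 * (s x - s' x) ^ 2 := funext fun x => by ring
        rw [h]; exact hint.const_mul _
      have hg2 : Integrable (fun x => ((u₀ / a - u₀ / b) * s' x) ^ 2) μ := by
        have h : (fun x => ((u₀ / a - u₀ / b) * s' x) ^ 2)
            = fun x => (u₀ / a - u₀ / b) ^ 2 * s' x ^ 2 := funext fun x => by ring
        rw [h]; exact hs'.const_mul _
      have hfg : Integrable (fun x => u₀ / a * (s x - s' x) * ((u₀ / a - u₀ / b) * s' x)) μ := by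
        have h : (fun x => u₀ / a * (s x - s' x) * ((u₀ / a - u₀ / b) * s' x))
            = fun x => (u₀ / a * (u₀ / a - u₀ / b)) * ((s x - s' x) * s' x) :=
          funext fun x => by ring
        rw [h]; exact hds'.const_mul _
      have key := minkowski_int (μ := μ) (fun x => u₀ / a * (s x - s' x))
        (fun x => (u₀ / a - u₀ / b) * s' x) hf2 hg2 hfg
      rw [sqrt_int_smul_sq, sqrt_int_smul_sq, ← hd_def, ← hb_def] at key
      have habs1 : |u₀ / a| = u₀ / a := abs_of_pos (div_pos hu₀ ha0')
      rw [habs1] at key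
      have h1 : u₀ / a * d ≤ d := by
        have hle : u₀ / a ≤ 1 := (div_le_one ha0').2 hua.le
        nlinarith
      have habd : |b - a| ≤ d := abs_sub_le_iff.2 ⟨by linarith, by linarith⟩
      have h2 : |u₀ / a - u₀ / b| * b ≤ d := by
        have heq : u₀ / a - u₀ / b = u₀ * (b - a) / (a * b) := by
          field_simp
        rw [heq, abs_div, abs_mul, abs_of_pos hu₀, abs_of_pos (mul_pos ha0' hb0')]
        have h3 : u₀ * |b - a| / (a * b) * b = u₀ / a * |b - a| := by
          field_simp
        rw [h3]
        calc u₀ / a * |b - a| ≤ 1 * d :=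
              mul_le_mul ((div_le_one ha0').2 hua.le) habd (abs_nonneg _) one_pos.le
          _ = d := one_mul d
      rw [hcv, hc'v,
        show (fun x => (u₀ / a * s x - u₀ / b * s' x) ^ 2)
          = fun x => (u₀ / a * (s x - s' x) + (u₀ / a - u₀ / b) * s' x) ^ 2 from
          funext fun x => by ring]
      linarith
  · -- the non-integrable (junk value) case
    have hK : ¬ Integrable (fun x => (c * s x - c' * s' x) ^ 2) μ := by
      intro hK
      apply hint
      have hmul : Integrable (fun x => s x * s' x) μ := by
        have h : (fun x => s x * s' x)
            = fun x => (c ^ 2 * s x ^ 2 + c' ^ 2 * s' x ^ 2 - (c * s x - c' * s' x) ^ 2)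
                / (2 * c * c') := by
          funext x; field_simp
          ring
        rw [h]
        exact (((hs.const_mul _).add (hs'.const_mul _)).sub hK).div_const _
      have h : (fun x => (s x - s' x) ^ 2)
          = fun x => s x ^ 2 - 2 * (s x * s' x) + s' x ^ 2 := funext fun x => by ring
      rw [h]
      exact (hs.sub (hmul.const_mul 2)).add hs'
    rw [integral_undef hK, Real.sqrt_zero]
    linarith
end

section
/- (Sector condition for sat₂.) Let L > 0, u₀ > 0, r > 0, and let a : [0,L] → ℝ satisfy 0 < a₀ ≤ a(x) ≤ a₁ for all x ∈ [0,L]. Set k(r) = min{u₀/(a₁ r), 1}. If s : (0,L) → ℝ is measurable with (∫₀ᴸ s(x)² dx)^{1/2} ≤ r, then for every x ∈ [0,L], ( sat₂(a·s)(x) − k(r) a(x) s(x) ) · s(x) ≥ 0, where a·s denotes the pointwise product x ↦ a(x)s(x). -/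
open MeasureTheory

/-- Sector condition for `sat₂`: if `0 < a₀ ≤ a(x) ≤ a₁` on `[0,L]`,
`k(r) = min (u₀/(a₁ r)) 1` and `‖s‖_{L²(0,L)} ≤ r`, then
`(sat₂(a·s)(x) − k(r) a(x) s(x)) · s(x) ≥ 0` for every `x ∈ [0,L]`. -/
theorem sat2_sector_condition (L u₀ r a₀ a₁ : ℝ) (hL : 0 < L) (hu₀ : 0 < u₀) (hr : 0 < r)
    (a : ℝ → ℝ) (ha₀ : 0 < a₀)
    (ha : ∀ x ∈ Set.Icc (0 : ℝ) L, a₀ ≤ a x ∧ a x ≤ a₁)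
    (s : ℝ → ℝ) (hsm : Measurable s)
    (hsr : Real.sqrt (∫ x in Set.Ioo 0 L, s x ^ 2) ≤ r) :
    ∀ x ∈ Set.Icc (0 : ℝ) L,
      (sat2 L u₀ (fun y => a y * s y) x - min (u₀ / (a₁ * r)) 1 * a x * s x) * s x ≥ 0 := by
  intro x hx
  have h0L : (0 : ℝ) ∈ Set.Icc (0 : ℝ) L := ⟨le_refl 0, hL.le⟩
  have ha₁ : 0 < a₁ := lt_of_lt_of_le ha₀ ((ha 0 h0L).1.trans (ha 0 h0L).2)
  have hax := ha x hx
  have haxpos : 0 < a x := ha₀.trans_le hax.1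
  set N := Real.sqrt (∫ y in Set.Ioo 0 L, (a y * s y) ^ 2) with hNdef
  set k := min (u₀ / (a₁ * r)) 1 with hkdef
  suffices h : ∃ c : ℝ, sat2 L u₀ (fun y => a y * s y) x = c * (a x * s x) ∧ k ≤ c by
    obtain ⟨c, hc, hkc⟩ := h
    rw [hc]
    nlinarith [mul_nonneg (mul_nonneg (sub_nonneg.2 hkc) haxpos.le) (sq_nonneg (s x))]
  unfold sat2
  by_cases hcase : N ≤ u₀
  · exact ⟨1, by rw [if_pos hcase]; ring, min_le_right _ _⟩
  · refine ⟨u₀ / N, by rw [if_neg hcase]; ring, ?_⟩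
    have hNpos : 0 < N := hu₀.trans (not_le.1 hcase)
    refine le_trans (min_le_left _ _) ?_
    have hNle : N ≤ a₁ * r := by
      by_cases hint : IntegrableOn (fun y => (a y * s y) ^ 2) (Set.Ioo 0 L)
      · have hs2m : AEStronglyMeasurable (fun y => s y ^ 2)
            (volume.restrict (Set.Ioo 0 L)) :=
          ((hsm.pow_const 2).aestronglyMeasurable)
        have hbound : ∀ᵐ y ∂(volume.restrict (Set.Ioo 0 L)),
            ‖s y ^ 2‖ ≤ ‖(a y * s y) ^ 2 / a₀ ^ 2‖ := by
          refine Filter.eventually_of_mem (self_mem_ae_restrict measurableSet_Ioo) ?_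
          intro y hy
          have hay := ha y ⟨hy.1.le, hy.2.le⟩
          have hsq : a₀ ^ 2 ≤ a y ^ 2 := by nlinarith [hay.1, ha₀]
          have h1 : a₀ ^ 2 * s y ^ 2 ≤ (a y * s y) ^ 2 := by
            rw [mul_pow]; exact mul_le_mul_of_nonneg_right hsq (sq_nonneg _)
          rw [Real.norm_eq_abs, Real.norm_eq_abs, abs_of_nonneg (sq_nonneg _),
            abs_of_nonneg (div_nonneg (sq_nonneg _) (sq_nonneg _))]
          rw [le_div_iff₀ (pow_pos ha₀ 2)]
          linarith
        have hs2int : IntegrableOn (fun y => s y ^ 2) (Set.Ioo 0 L) :=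
          Integrable.mono (hint.div_const (a₀ ^ 2)) hs2m hbound
        have hmono : (∫ y in Set.Ioo 0 L, (a y * s y) ^ 2) ≤
            ∫ y in Set.Ioo 0 L, a₁ ^ 2 * s y ^ 2 := by
          refine setIntegral_mono_on hint (hs2int.const_mul _) measurableSet_Ioo ?_
          intro y hy
          have hay := ha y ⟨hy.1.le, hy.2.le⟩
          have hsq : a y ^ 2 ≤ a₁ ^ 2 := by nlinarith [hay.1, hay.2, ha₀]
          calc (a y * s y) ^ 2 = a y ^ 2 * s y ^ 2 := by ring
            _ ≤ a₁ ^ 2 * s y ^ 2 := mul_le_mul_of_nonneg_right hsq (sq_nonneg _)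
        have : N ≤ Real.sqrt (∫ y in Set.Ioo 0 L, a₁ ^ 2 * s y ^ 2) :=
          Real.sqrt_le_sqrt hmono
        calc N ≤ Real.sqrt (∫ y in Set.Ioo 0 L, a₁ ^ 2 * s y ^ 2) := this
          _ = a₁ * Real.sqrt (∫ y in Set.Ioo 0 L, s y ^ 2) := by
              rw [integral_const_mul, Real.sqrt_mul (sq_nonneg a₁),
                Real.sqrt_sq ha₁.le]
          _ ≤ a₁ * r := mul_le_mul_of_nonneg_left hsr ha₁.le
      · exfalso
        apply hcase
        rw [hNdef, integral_undef hint, Real.sqrt_zero]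
        exact hu₀.le
    gcongr
end

section
/- (Sector condition for the localized saturation.) Let u₀ > 0, r > 0 and 0 < a₀ ≤ a₁. Set k(r) = min{u₀/(a₁ r), 1}. Then for every real numbers a with a₀ ≤ a ≤ a₁ and s with |s| ≤ r, one has ( sat(a·s) − k(r)·a·s ) · s ≥ 0. -/
/-- The scalar saturation function with level `u₀`. -/
noncomputable def sat (u₀ s : ℝ) : ℝ :=
  if s ≤ -u₀ then -u₀ else if s ≤ u₀ then s else u₀

/-- Sector condition for the localized saturation: if `0 < a₀ ≤ a ≤ a₁`, `|s| ≤ r` and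
`k(r) = min (u₀/(a₁ r)) 1`, then `(sat(a s) − k(r) a s) s ≥ 0`. -/
theorem satloc_sector_condition (u₀ r a₀ a₁ : ℝ) (hu₀ : 0 < u₀) (hr : 0 < r)
    (ha₀ : 0 < a₀) (ha₀₁ : a₀ ≤ a₁) :
    ∀ a s : ℝ, a₀ ≤ a → a ≤ a₁ → |s| ≤ r →
      (sat u₀ (a * s) - min (u₀ / (a₁ * r)) 1 * a * s) * s ≥ 0 := by
  intro a s ha hA hs
  have ha1 : 0 < a₁ := lt_of_lt_of_le ha₀ ha₀₁
  have hpos : 0 < a₁ * r := mul_pos ha1 hr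
  set k := min (u₀ / (a₁ * r)) 1 with hk
  have hk1 : k ≤ 1 := min_le_right _ _
  have hk2 : k ≤ u₀ / (a₁ * r) := min_le_left _ _
  have hk0 : 0 ≤ k := le_min (le_of_lt (div_pos hu₀ hpos)) zero_le_one
  have hkmul : k * (a₁ * r) ≤ u₀ := by
    calc k * (a₁ * r) ≤ u₀ / (a₁ * r) * (a₁ * r) := by nlinarith
    _ = u₀ := div_mul_cancel₀ _ (ne_of_gt hpos)
  have habs := abs_le.mp hs
  have ha' : 0 < a := lt_of_lt_of_le ha₀ ha
  unfold sat
  split_ifs with h1 h2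
  · -- a*s ≤ -u₀, so s < 0
    have hs0 : s ≤ 0 := by nlinarith
    have hle : k * (a * (-s)) ≤ u₀ := by
      have : a * (-s) ≤ a₁ * r := by nlinarith
      nlinarith
    nlinarith
  · -- -u₀ < a*s ≤ u₀, sat = a*s
    nlinarith [mul_nonneg (mul_nonneg (sub_nonneg.mpr hk1) ha'.le) (sq_nonneg s)]
  · -- a*s > u₀, so s > 0
    push_neg at h1 h2
    have hs0 : 0 ≤ s := by nlinarith
    have hle : k * (a * s) ≤ u₀ := by
      have : a * s ≤ a₁ * r := by nlinarith
      nlinarith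
    nlinarith
end

section
/- Let L > 0, T > 0, u₀ > 0, and let a : (0,L) → ℝ be measurable with 0 ≤ a(x) ≤ a₁ for all x. For all jointly measurable functions y, z : [0,T] × (0,L) → ℝ such that (t,x) ↦ y(t,x) − z(t,x) is square-integrable on [0,T] × (0,L) and y(t,·), z(t,·) are square-integrable on (0,L) for each t, one has ∫₀ᵀ ( ∫₀ᴸ ( sat₂(a·y(t,·))(x) − sat₂(a·z(t,·))(x) )² dx )^{1/2} dt ≤ 3 a₁ √T ( ∫₀ᵀ ∫₀ᴸ (y(t,x) − z(t,x))² dx dt )^{1/2}. -/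
/-! For `u₀ ≥ 0`, `sat₂` is the radial retraction `u ↦ min(1, u₀/‖u‖) u` onto the closed ball of
radius `u₀` in `L²(0,L)`, and a radial retraction onto a ball is `2`-Lipschitz in any normed space:
writing `r(u) - r(v) = c_u (u - v) + (c_u - c_v) v` with `‖v‖ ≤ ‖u‖`, the second term is at most
`‖u‖ - ‖v‖`. Multiplication by `a` costs a factor `a₁`, so for each `t` the integrand is at most
`2 a₁ ‖y(t) - z(t)‖`, and Cauchy–Schwarz in time turns its integral over `(0,T)` into
`2 a₁ √T ‖y - z‖_{L²}`. -/

open MeasureTheory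

open Real

noncomputable section

def radialFactor (R r : ℝ) : ℝ := if r ≤ R then 1 else R / r

lemma radialFactor_mem_Icc {R : ℝ} (hR : 0 ≤ R) (r : ℝ) : radialFactor R r ∈ Set.Icc 0 1 := by
  unfold radialFactor
  split_ifs with h
  · exact ⟨zero_le_one, le_rfl⟩
  · have hr : 0 ≤ r := hR.trans (not_le.mp h).le
    exact ⟨div_nonneg hR hr, div_le_one_of_le₀ (not_le.mp h).le hr⟩

lemma abs_radialFactor_sub_mul_le {R a b : ℝ} (hR : 0 ≤ R) (hba : b ≤ a) :
    |radialFactor R a - radialFactor R b| * b ≤ a - b := by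
  unfold radialFactor
  split_ifs with ha hbR hbR
  · simpa using hba
  · linarith
  · have ha0 : 0 < a := hR.trans_lt (not_le.mp ha)
    have hRa : R / a ≤ 1 := div_le_one_of_le₀ (not_le.mp ha).le ha0.le
    rw [abs_of_nonpos (by linarith)]
    calc -(R / a - 1) * b ≤ (1 - R / a) * a := by nlinarith
      _ = a - R := by field_simp
      _ ≤ a - b := by linarith
  · have ha0 : 0 < a := hR.trans_lt (not_le.mp ha)
    have hb0 : 0 < b := hR.trans_lt (not_le.mp hbR)
    rw [abs_of_nonpos (sub_nonpos.mpr (div_le_div_of_nonneg_left hR hb0 hba)),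
      show -(R / a - R / b) * b = R / a * (a - b) by field_simp; ring]
    exact mul_le_of_le_one_left (by linarith) (div_le_one_of_le₀ (not_le.mp ha).le ha0.le)

variable {E : Type*} [SeminormedAddCommGroup E] [NormedSpace ℝ E]

def radialRetraction (R : ℝ) (u : E) : E := radialFactor R ‖u‖ • u

lemma norm_radialRetraction_sub_le {R : ℝ} (hR : 0 ≤ R) (u v : E) :
    ‖radialRetraction R u - radialRetraction R v‖ ≤ 2 * ‖u - v‖ := by
  wlog hvu : ‖v‖ ≤ ‖u‖ generalizing u v
  · rw [norm_sub_rev, norm_sub_rev u]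
    exact this v u (not_le.mp hvu).le
  set c := radialFactor R ‖u‖
  set d := radialFactor R ‖v‖
  have hc := radialFactor_mem_Icc hR ‖u‖
  have split : radialRetraction R u - radialRetraction R v = c • (u - v) + (c - d) • v := by
    simp only [radialRetraction, smul_sub, sub_smul]; abel
  calc ‖radialRetraction R u - radialRetraction R v‖
      ≤ |c| * ‖u - v‖ + |c - d| * ‖v‖ := by
        rw [split, ← Real.norm_eq_abs, ← Real.norm_eq_abs, ← norm_smul, ← norm_smul]
        exact norm_add_le _ _
    _ ≤ ‖u - v‖ + (‖u‖ - ‖v‖) := by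
        gcongr
        · exact mul_le_of_le_one_left (norm_nonneg _) (abs_le.mpr ⟨by linarith [hc.1], hc.2⟩)
        · exact abs_radialFactor_sub_mul_le hR hvu
    _ ≤ 2 * ‖u - v‖ := by linarith [norm_sub_norm_le u v]

end

section L2

variable {α : Type*} [MeasurableSpace α] {μ : Measure α}

lemma norm_toLp_two_eq_sqrt_integral_sq {f : α → ℝ} (hf : MemLp f 2 μ) :
    ‖hf.toLp f‖ = √(∫ x, f x ^ 2 ∂μ) := by
  rw [← sqrt_sq (norm_nonneg _), ← real_inner_self_eq_norm_sq, L2.inner_def]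
  congr 1
  refine integral_congr_ae ?_
  filter_upwards [hf.coeFn_toLp] with x hx
  rw [hx, Real.inner_apply, sq]

lemma integral_mul_le_sqrt_integral_sq_mul_sqrt_integral_sq {f g : α → ℝ} (hf : MemLp f 2 μ)
    (hg : MemLp g 2 μ) : ∫ x, f x * g x ∂μ ≤ √(∫ x, f x ^ 2 ∂μ) * √(∫ x, g x ^ 2 ∂μ) := by
  rw [← norm_toLp_two_eq_sqrt_integral_sq hf, ← norm_toLp_two_eq_sqrt_integral_sq hg]
  refine le_of_eq_of_le ?_ (real_inner_le_norm _ _)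
  rw [L2.inner_def]
  refine integral_congr_ae ?_
  filter_upwards [hf.coeFn_toLp, hg.coeFn_toLp] with x hfx hgx
  rw [hfx, hgx, Real.inner_apply]

lemma memLp_two_sqrt {H : α → ℝ} (hH0 : 0 ≤ᵐ[μ] H) (hH : Integrable H μ) :
    MemLp (fun x => √(H x)) 2 μ := by
  refine (memLp_two_iff_integrable_sq hH.aemeasurable.sqrt.aestronglyMeasurable).mpr ?_
  refine hH.congr ?_
  filter_upwards [hH0] with x hx
  exact (sq_sqrt hx).symm

lemma integral_sqrt_le_sqrt_mul_sqrt_integral [IsFiniteMeasure μ] {H : α → ℝ}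
    (hH0 : 0 ≤ᵐ[μ] H) (hH : Integrable H μ) :
    ∫ x, √(H x) ∂μ ≤ √(μ.real Set.univ) * √(∫ x, H x ∂μ) := by
  have hCS := integral_mul_le_sqrt_integral_sq_mul_sqrt_integral_sq (memLp_const (1 : ℝ))
    (memLp_two_sqrt hH0 hH)
  simp only [one_mul, one_pow, integral_const, smul_eq_mul, mul_one] at hCS
  refine hCS.trans_eq ?_
  congr 2
  refine integral_congr_ae ?_
  filter_upwards [hH0] with x hx
  exact sq_sqrt hx

lemma integral_le_mul_sqrt_mul_sqrt_integral [IsFiniteMeasure μ] {F H : α → ℝ} {C : ℝ}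
    (hC : 0 ≤ C) (hF0 : 0 ≤ᵐ[μ] F) (hFH : ∀ᵐ x ∂μ, F x ≤ C * √(H x)) (hH0 : 0 ≤ᵐ[μ] H)
    (hH : Integrable H μ) :
    ∫ x, F x ∂μ ≤ C * √(μ.real Set.univ) * √(∫ x, H x ∂μ) := by
  calc ∫ x, F x ∂μ ≤ ∫ x, C * √(H x) ∂μ :=
        integral_mono_of_nonneg hF0
          (((memLp_two_sqrt hH0 hH).integrable one_le_two).const_mul C) hFH
    _ = C * ∫ x, √(H x) ∂μ := integral_const_mul _ _
    _ ≤ C * (√(μ.real Set.univ) * √(∫ x, H x ∂μ)) := by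
        gcongr
        exact integral_sqrt_le_sqrt_mul_sqrt_integral hH0 hH
    _ = C * √(μ.real Set.univ) * √(∫ x, H x ∂μ) := (mul_assoc _ _ _).symm

lemma sqrt_integral_mul_sq_le {a g : α → ℝ} {c : ℝ} (hc : 0 ≤ c) (ha : ∀ x, |a x| ≤ c)
    (hg : Integrable (fun x => g x ^ 2) μ) :
    √(∫ x, (a x * g x) ^ 2 ∂μ) ≤ c * √(∫ x, g x ^ 2 ∂μ) := by
  calc √(∫ x, (a x * g x) ^ 2 ∂μ) ≤ √(∫ x, c ^ 2 * g x ^ 2 ∂μ) := by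
        refine sqrt_le_sqrt (integral_mono_of_nonneg (ae_of_all _ fun x => sq_nonneg _)
          (hg.const_mul _) (ae_of_all _ fun x => ?_))
        simp only [mul_pow, ← sq_abs (a x)]
        gcongr
        exact ha x
    _ = c * √(∫ x, g x ^ 2 ∂μ) := by
        rw [integral_const_mul, sqrt_mul (sq_nonneg c), sqrt_sq hc]

end L2

lemma sat2_eq_radialFactor_smul (L u₀ : ℝ) (s : ℝ → ℝ) :
    sat2 L u₀ s = radialFactor u₀ √(∫ x in Set.Ioo 0 L, s x ^ 2) • s := by
  ext x
  simp only [sat2, radialFactor, Pi.smul_apply, smul_eq_mul]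
  split_ifs
  · rw [one_mul]
  · rw [mul_div_right_comm]

lemma sqrt_integral_sq_sat2_sub_le {L u₀ : ℝ} (hu₀ : 0 ≤ u₀) {u v : ℝ → ℝ}
    (hu : MemLp u 2 (volume.restrict (Set.Ioo 0 L)))
    (hv : MemLp v 2 (volume.restrict (Set.Ioo 0 L))) :
    √(∫ x in Set.Ioo 0 L, (sat2 L u₀ u x - sat2 L u₀ v x) ^ 2) ≤
      2 * √(∫ x in Set.Ioo 0 L, (u x - v x) ^ 2) := by
  have hsat {s : ℝ → ℝ} (hs : MemLp s 2 (volume.restrict (Set.Ioo 0 L))) :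
      sat2 L u₀ s = radialFactor u₀ ‖hs.toLp s‖ • s := by
    rw [norm_toLp_two_eq_sqrt_integral_sq, sat2_eq_radialFactor_smul]
  rw [hsat hu, hsat hv]
  calc _ = ‖(hu.const_smul (radialFactor u₀ ‖hu.toLp u‖)).toLp _ -
          (hv.const_smul (radialFactor u₀ ‖hv.toLp v‖)).toLp _‖ := by
        rw [← MemLp.toLp_sub,
          norm_toLp_two_eq_sqrt_integral_sq ((hu.const_smul _).sub (hv.const_smul _))]
        rfl
    _ = ‖radialRetraction u₀ (hu.toLp u) - radialRetraction u₀ (hv.toLp v)‖ := by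
        rw [MemLp.toLp_const_smul, MemLp.toLp_const_smul]; rfl
    _ ≤ 2 * ‖hu.toLp u - hv.toLp v‖ := norm_radialRetraction_sub_le hu₀ _ _
    _ = _ := by rw [← MemLp.toLp_sub, norm_toLp_two_eq_sqrt_integral_sq (hu.sub hv)]; rfl

lemma sqrt_integral_sq_sat2_mul_sub_le {L u₀ c : ℝ} (hu₀ : 0 ≤ u₀) {a u v : ℝ → ℝ}
    (ham : AEStronglyMeasurable a (volume.restrict (Set.Ioo 0 L))) (ha : ∀ x, |a x| ≤ c)
    (hu : MemLp u 2 (volume.restrict (Set.Ioo 0 L)))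
    (hv : MemLp v 2 (volume.restrict (Set.Ioo 0 L))) :
    √(∫ x in Set.Ioo 0 L,
        (sat2 L u₀ (fun x => a x * u x) x - sat2 L u₀ (fun x => a x * v x) x) ^ 2) ≤
      2 * c * √(∫ x in Set.Ioo 0 L, (u x - v x) ^ 2) := by
  have hmul {w : ℝ → ℝ} (hw : MemLp w 2 (volume.restrict (Set.Ioo 0 L))) :
      MemLp (fun x => a x * w x) 2 (volume.restrict (Set.Ioo 0 L)) :=
    hw.of_le_mul (ham.mul hw.1) (ae_of_all _ fun x => by rw [norm_mul]; gcongr; exact ha x)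
  refine (sqrt_integral_sq_sat2_sub_le hu₀ (hmul hu) (hmul hv)).trans ?_
  rw [mul_assoc]
  gcongr
  simp only [← mul_sub]
  exact sqrt_integral_mul_sq_le ((abs_nonneg _).trans (ha 0)) ha (hu.sub hv).integrable_sq

theorem sat2_L1L2_estimate_general (L T u₀ a₁ : ℝ) (hu₀ : 0 < u₀)
    (a : ℝ → ℝ) (ham : Measurable a) (ha : ∀ x, 0 ≤ a x ∧ a x ≤ a₁)
    (y z : ℝ → ℝ → ℝ)
    (hym : Measurable fun p : ℝ × ℝ => y p.1 p.2)
    (hzm : Measurable fun p : ℝ × ℝ => z p.1 p.2)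
    (hyz : Integrable (fun p : ℝ × ℝ => (y p.1 p.2 - z p.1 p.2) ^ 2)
      (volume.restrict (Set.Ioo 0 T ×ˢ Set.Ioo 0 L)))
    (hy : ∀ t, Integrable (fun x => y t x ^ 2) (volume.restrict (Set.Ioo 0 L)))
    (hz : ∀ t, Integrable (fun x => z t x ^ 2) (volume.restrict (Set.Ioo 0 L))) :
    ∫ t in Set.Ioo 0 T,
        Real.sqrt (∫ x in Set.Ioo 0 L,
          (sat2 L u₀ (fun x => a x * y t x) x - sat2 L u₀ (fun x => a x * z t x) x) ^ 2) ≤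
      3 * a₁ * Real.sqrt T *
        Real.sqrt (∫ t in Set.Ioo 0 T, ∫ x in Set.Ioo 0 L, (y t x - z t x) ^ 2) := by
  have ha₁ : 0 ≤ a₁ := (ha 0).1.trans (ha 0).2
  have hslice {w : ℝ → ℝ → ℝ} (hwm : Measurable fun p : ℝ × ℝ => w p.1 p.2)
      (hw : ∀ t, Integrable (fun x => w t x ^ 2) (volume.restrict (Set.Ioo 0 L))) (t : ℝ) :
      MemLp (w t) 2 (volume.restrict (Set.Ioo 0 L)) :=
    (memLp_two_iff_integrable_sq hwm.of_uncurry_left.aestronglyMeasurable).mpr (hw t)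
  have hH : Integrable (fun t => ∫ x in Set.Ioo 0 L, (y t x - z t x) ^ 2)
      (volume.restrict (Set.Ioo 0 T)) := by
    rw [Measure.volume_eq_prod, ← Measure.prod_restrict] at hyz
    exact hyz.integral_prod_left
  have : IsFiniteMeasure (volume.restrict (Set.Ioo (0 : ℝ) T)) :=
    isFiniteMeasure_restrict.mpr measure_Ioo_lt_top.ne
  have hvolT : √((volume.restrict (Set.Ioo (0 : ℝ) T)).real Set.univ) = √T := by
    rw [measureReal_restrict_apply_univ, Real.volume_real_Ioo, sub_zero]
    rcases le_total T 0 with hT | hT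
    · rw [max_eq_right hT, sqrt_zero, sqrt_eq_zero'.mpr hT]
    · rw [max_eq_left hT]
  calc _ ≤ 2 * a₁ * √T * √(∫ t in Set.Ioo 0 T, ∫ x in Set.Ioo 0 L, (y t x - z t x) ^ 2) := by
        rw [← hvolT]
        refine integral_le_mul_sqrt_mul_sqrt_integral (by positivity)
          (ae_of_all _ fun t => sqrt_nonneg _) (ae_of_all _ fun t => ?_)
          (ae_of_all _ fun t => integral_nonneg fun x => sq_nonneg _) hH
        exact sqrt_integral_sq_sat2_mul_sub_le hu₀.le ham.aestronglyMeasurable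
          (fun x => abs_le.mpr ⟨by linarith [ha x], (ha x).2⟩) (hslice hym hy t) (hslice hzm hz t)
    _ ≤ _ := by gcongr; norm_num

/-- `L¹(0,T; L²(0,L))` estimate: the distance between the saturated feedbacks
`sat₂(a·y)` and `sat₂(a·z)` is bounded by `3 a₁ √T` times the `L²(0,T; L²(0,L))`
norm of `y − z`. -/
theorem sat2_L1L2_estimate (L T u₀ a₁ : ℝ) (hL : 0 < L) (hT : 0 < T) (hu₀ : 0 < u₀)
    (a : ℝ → ℝ) (ham : Measurable a) (ha : ∀ x, 0 ≤ a x ∧ a x ≤ a₁)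
    (y z : ℝ → ℝ → ℝ)
    (hym : Measurable fun p : ℝ × ℝ => y p.1 p.2)
    (hzm : Measurable fun p : ℝ × ℝ => z p.1 p.2)
    (hyz : Integrable (fun p : ℝ × ℝ => (y p.1 p.2 - z p.1 p.2) ^ 2)
      (volume.restrict (Set.Ioo 0 T ×ˢ Set.Ioo 0 L)))
    (hy : ∀ t, Integrable (fun x => y t x ^ 2) (volume.restrict (Set.Ioo 0 L)))
    (hz : ∀ t, Integrable (fun x => z t x ^ 2) (volume.restrict (Set.Ioo 0 L))) :
    ∫ t in Set.Ioo 0 T,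
        Real.sqrt (∫ x in Set.Ioo 0 L,
          (sat2 L u₀ (fun x => a x * y t x) x - sat2 L u₀ (fun x => a x * z t x) x) ^ 2) ≤
      3 * a₁ * Real.sqrt T *
        Real.sqrt (∫ t in Set.Ioo 0 T, ∫ x in Set.Ioo 0 L, (y t x - z t x) ^ 2) :=
  sat2_L1L2_estimate_general L T u₀ a₁ hu₀ a ham ha y z hym hzm hyz hy hz
end

section
/- (Dissipativity of the KdV operator A.) Let L > 0 and let w : ℝ → ℝ be three times continuously differentiable with w(0) = w(L) = 0 and w'(L) = 0. Then ∫₀ᴸ w(x) ( w'(x) + w'''(x) ) dx = (1/2) (w'(0))²; in particular ∫₀ᴸ w(x) ( −w'(x) − w'''(x) ) dx ≤ 0. -/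
/-!
The integrand `w (w' + w''')` is the exact derivative of the flux `w²/2 + w w'' - w'²/2`.
The boundary conditions make the flux vanish at `L` and equal `-(w'(0))²/2` at `0`.
-/

open intervalIntegral

noncomputable def kdvFlux (w : ℝ → ℝ) (x : ℝ) : ℝ :=
  w x ^ 2 / 2 + w x * iteratedDeriv 2 w x - deriv w x ^ 2 / 2

theorem ContDiff.hasDerivAt_iteratedDeriv {f : ℝ → ℝ} {n k : ℕ} (hf : ContDiff ℝ n f)
    (hk : k < n) (x : ℝ) : HasDerivAt (iteratedDeriv k f) (iteratedDeriv (k + 1) f x) x := by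
  rw [iteratedDeriv_succ]
  exact (hf.differentiable_iteratedDeriv k (by exact_mod_cast hk) x).hasDerivAt

theorem hasDerivAt_kdvFlux {w : ℝ → ℝ} (hw : ContDiff ℝ 3 w) (x : ℝ) :
    HasDerivAt (kdvFlux w) (w x * (deriv w x + iteratedDeriv 3 w x)) x := by
  have hw₀ : HasDerivAt w (deriv w x) x := by
    simpa using hw.hasDerivAt_iteratedDeriv (k := 0) (by norm_num) x
  have hw₁ : HasDerivAt (deriv w) (iteratedDeriv 2 w x) x := by
    simpa using hw.hasDerivAt_iteratedDeriv (k := 1) (by norm_num) x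
  have hw₂ := hw.hasDerivAt_iteratedDeriv (k := 2) (by norm_num) x
  refine ((((hw₀.fun_pow 2).div_const 2).fun_add (hw₀.fun_mul hw₂)).fun_sub
    ((hw₁.fun_pow 2).div_const 2)).congr_deriv ?_
  push_cast
  ring

theorem integral_mul_deriv_add_iteratedDeriv_three {w : ℝ → ℝ} (hw : ContDiff ℝ 3 w)
    (a b : ℝ) :
    ∫ x in a..b, w x * (deriv w x + iteratedDeriv 3 w x) = kdvFlux w b - kdvFlux w a := by
  have hcont : Continuous fun x ↦ w x * (deriv w x + iteratedDeriv 3 w x) :=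
    hw.continuous.mul ((hw.continuous_deriv (by norm_num)).add
      (hw.continuous_iteratedDeriv 3 le_rfl))
  exact integral_eq_sub_of_hasDerivAt (fun x _ ↦ hasDerivAt_kdvFlux hw x)
    (hcont.intervalIntegrable a b)

theorem kdv_operator_dissipative_general (L : ℝ) (w : ℝ → ℝ)
    (hw : ContDiff ℝ 3 w) (h0 : w 0 = 0) (hLval : w L = 0) (hL' : deriv w L = 0) :
    (∫ x in (0 : ℝ)..L, w x * (deriv w x + iteratedDeriv 3 w x)) = (1 / 2) * (deriv w 0) ^ 2 ∧
      (∫ x in (0 : ℝ)..L, w x * (-deriv w x - iteratedDeriv 3 w x)) ≤ 0 := by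
  have hidentity : ∫ x in (0 : ℝ)..L, w x * (deriv w x + iteratedDeriv 3 w x)
      = 1 / 2 * deriv w 0 ^ 2 := by
    rw [integral_mul_deriv_add_iteratedDeriv_three hw, kdvFlux, kdvFlux, h0, hLval, hL']
    ring
  refine ⟨hidentity, ?_⟩
  calc ∫ x in (0 : ℝ)..L, w x * (-deriv w x - iteratedDeriv 3 w x)
      = -∫ x in (0 : ℝ)..L, w x * (deriv w x + iteratedDeriv 3 w x) := by
        rw [← integral_neg]
        congr 1 with x
        ring
    _ ≤ 0 := by
        rw [hidentity]
        nlinarith [sq_nonneg (deriv w 0)]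

/-- Dissipativity of the KdV operator `A w = −w' − w'''` on its domain:
for `w` of class `C³` with `w(0) = w(L) = w'(L) = 0`,
`∫₀ᴸ w (w' + w''') = (1/2) (w'(0))²`, hence `∫₀ᴸ w (−w' − w''') ≤ 0`. -/
theorem kdv_operator_dissipative (L : ℝ) (hL : 0 < L) (w : ℝ → ℝ)
    (hw : ContDiff ℝ 3 w) (h0 : w 0 = 0) (hLval : w L = 0) (hL' : deriv w L = 0) :
    (∫ x in (0 : ℝ)..L, w x * (deriv w x + iteratedDeriv 3 w x)) = (1 / 2) * (deriv w 0) ^ 2 ∧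
      (∫ x in (0 : ℝ)..L, w x * (-deriv w x - iteratedDeriv 3 w x)) ≤ 0 :=
  kdv_operator_dissipative_general L w hw h0 hLval hL'
end

section
/- Let L > 0, let φ : ℝ → ℝ be continuously differentiable with φ(0) = 0, and let d ∈ (0, L]. Then ∫₀ᴸ φ(x)² dx ≤ (d²/2) ∫₀ᴸ (φ'(x))² dx + (1/d) ∫₀ᴸ x φ(x)² dx. -/
/-!
Split `[0, L]` at `d`. On `[0, d]`, the fundamental theorem of calculus and Cauchy–Schwarz give
`φ(x)² ≤ x ∫₀ᴸ φ'²`, which integrates to `(d²/2) ∫₀ᴸ φ'²`. On `[d, L]`, `1 ≤ x / d`.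
-/

open MeasureTheory

theorem sq_intervalIntegral_le_mul_integral_sq {f : ℝ → ℝ} {a b : ℝ} (hab : a ≤ b)
    (hf : IntervalIntegrable f volume a b)
    (hf2 : IntervalIntegrable (fun t => f t ^ 2) volume a b) :
    (∫ t in a..b, f t) ^ 2 ≤ (b - a) * ∫ t in a..b, f t ^ 2 := by
  rcases hab.eq_or_lt with rfl | hlt
  · simp
  set I := ∫ t in a..b, f t
  set c := I / (b - a)
  -- the variance of `f` about its mean `c` is nonnegative
  have hvar : 0 ≤ ∫ t in a..b, (f t - c) ^ 2 :=
    intervalIntegral.integral_nonneg hab fun t _ => sq_nonneg _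
  have hexpand :
      ∫ t in a..b, (f t - c) ^ 2 = (∫ t in a..b, f t ^ 2) - 2 * c * I + c ^ 2 * (b - a) := by
    simp only [sub_sq, mul_assoc]
    rw [intervalIntegral.integral_add (hf2.sub ((hf.mul_const _).const_mul _))
        intervalIntegrable_const,
      intervalIntegral.integral_sub hf2 ((hf.mul_const _).const_mul _),
      intervalIntegral.integral_const_mul, intervalIntegral.integral_mul_const,
      intervalIntegral.integral_const, smul_eq_mul]
    ring
  have hba : 0 < b - a := sub_pos.2 hlt
  have hc : c * (b - a) = I := div_mul_cancel₀ I hba.ne'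
  rw [hexpand] at hvar
  nlinarith [mul_nonneg hba.le hvar]

theorem sq_le_mul_integral_deriv_sq {φ : ℝ → ℝ} (hφ : ContDiff ℝ 1 φ) (h0 : φ 0 = 0) {x : ℝ}
    (hx : 0 ≤ x) : φ x ^ 2 ≤ x * ∫ t in (0 : ℝ)..x, deriv φ t ^ 2 := by
  have hφ' : Continuous (deriv φ) := hφ.continuous_deriv le_rfl
  have hftc : φ x = ∫ t in (0 : ℝ)..x, deriv φ t := by
    rw [intervalIntegral.integral_deriv_eq_sub (fun t _ => hφ.differentiable one_ne_zero t)
      (hφ'.intervalIntegrable _ _), h0, sub_zero]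
  simpa [hftc] using
    sq_intervalIntegral_le_mul_integral_sq hx (hφ'.intervalIntegrable _ _)
      ((hφ'.pow 2).intervalIntegrable _ _)

theorem integral_sq_le_half_sq_mul_integral_deriv_sq {φ : ℝ → ℝ} (hφ : ContDiff ℝ 1 φ)
    (h0 : φ 0 = 0) {d L : ℝ} (hd : 0 ≤ d) (hdL : d ≤ L) :
    ∫ x in (0 : ℝ)..d, φ x ^ 2 ≤ d ^ 2 / 2 * ∫ x in (0 : ℝ)..L, deriv φ x ^ 2 := by
  set C := ∫ x in (0 : ℝ)..L, deriv φ x ^ 2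
  have hpointwise : ∀ x ∈ Set.Icc (0 : ℝ) d, φ x ^ 2 ≤ x * C := by
    rintro x ⟨hx0, hxd⟩
    have hmono : ∫ t in (0 : ℝ)..x, deriv φ t ^ 2 ≤ C :=
      intervalIntegral.integral_mono_interval le_rfl hx0 (hxd.trans hdL)
        (Filter.Eventually.of_forall fun t => sq_nonneg _)
        (((hφ.continuous_deriv le_rfl).pow 2).intervalIntegrable _ _)
    exact (sq_le_mul_integral_deriv_sq hφ h0 hx0).trans (mul_le_mul_of_nonneg_left hmono hx0)
  calc ∫ x in (0 : ℝ)..d, φ x ^ 2 ≤ ∫ x in (0 : ℝ)..d, x * C :=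
        intervalIntegral.integral_mono_on hd ((hφ.continuous.pow 2).intervalIntegrable _ _)
          ((continuous_id.mul continuous_const).intervalIntegrable _ _) hpointwise
    _ = d ^ 2 / 2 * C := by
        rw [intervalIntegral.integral_mul_const, integral_id]
        ring

theorem intervalIntegral_le_one_div_mul_integral_id_mul {g : ℝ → ℝ} {d L : ℝ} (hd : 0 < d)
    (hdL : d ≤ L) (hg : IntervalIntegrable g volume d L)
    (hxg : IntervalIntegrable (fun x => x * g x) volume d L)
    (hg0 : ∀ x ∈ Set.Icc d L, 0 ≤ g x) :
    ∫ x in d..L, g x ≤ 1 / d * ∫ x in d..L, x * g x := by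
  rw [← intervalIntegral.integral_const_mul]
  refine intervalIntegral.integral_mono_on hdL hg (hxg.const_mul _) fun x hx => ?_
  rw [← mul_assoc, one_div_mul_eq_div]
  exact le_mul_of_one_le_left (hg0 x hx) ((one_le_div hd).2 hx.1)

theorem weighted_poincare_general (L : ℝ) (φ : ℝ → ℝ)
    (hφ : ContDiff ℝ 1 φ) (h0 : φ 0 = 0) (d : ℝ) (hd : d ∈ Set.Ioc (0 : ℝ) L) :
    (∫ x in (0 : ℝ)..L, (φ x) ^ 2) ≤
      (d ^ 2 / 2) * (∫ x in (0 : ℝ)..L, (deriv φ x) ^ 2) +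
        (1 / d) * ∫ x in (0 : ℝ)..L, x * (φ x) ^ 2 := by
  obtain ⟨hd0, hdL⟩ := hd
  have hsq : Continuous fun x => φ x ^ 2 := hφ.continuous.pow 2
  have hxsq : Continuous fun x => x * φ x ^ 2 := continuous_id.mul hsq
  have hnear := integral_sq_le_half_sq_mul_integral_deriv_sq hφ h0 hd0.le hdL
  have hfar := intervalIntegral_le_one_div_mul_integral_id_mul hd0 hdL
    (hsq.intervalIntegrable _ _) (hxsq.intervalIntegrable _ _) fun x _ => sq_nonneg (φ x)
  have hnear_weight : 0 ≤ ∫ x in (0 : ℝ)..d, x * φ x ^ 2 :=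
    intervalIntegral.integral_nonneg hd0.le fun x hx => mul_nonneg hx.1 (sq_nonneg _)
  rw [← intervalIntegral.integral_add_adjacent_intervals (hsq.intervalIntegrable 0 d)
      (hsq.intervalIntegrable d L),
    ← intervalIntegral.integral_add_adjacent_intervals (hxsq.intervalIntegrable 0 d)
      (hxsq.intervalIntegrable d L)]
  nlinarith [mul_nonneg (one_div_pos.2 hd0).le hnear_weight]

/-- Weighted Poincaré-type inequality (Coron–Crépeau, Lemma 16): for `φ` of class `C¹`
with `φ(0) = 0` and every `d ∈ (0, L]`,
`∫₀ᴸ φ² ≤ (d²/2) ∫₀ᴸ (φ')² + (1/d) ∫₀ᴸ x φ²`. -/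
theorem weighted_poincare (L : ℝ) (hL : 0 < L) (φ : ℝ → ℝ)
    (hφ : ContDiff ℝ 1 φ) (h0 : φ 0 = 0) (d : ℝ) (hd : d ∈ Set.Ioc (0 : ℝ) L) :
    (∫ x in (0 : ℝ)..L, (φ x) ^ 2) ≤
      (d ^ 2 / 2) * (∫ x in (0 : ℝ)..L, (deriv φ x) ^ 2) +
        (1 / d) * ∫ x in (0 : ℝ)..L, x * (φ x) ^ 2 :=
  weighted_poincare_general L φ hφ h0 d hd
end
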